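/- (Piecewise formula for CR_a, from the proof of Lemma 2.) Fix an integer n ≥ 1, σ > 0, λ > 0, α ∈ (0,1), θ > 0 and ν ≥ 0, and let μ = N(θ, σ²/n). Then μ({x ∈ ℝ : |x − θ| < z_{α/2}·σ̃(θ)/√n and |x| > ν}) = CR_a(θ, ν), where CR_a(θ, ν) = (P_s(θ,ν) − 2Φ(−z_{α/2}σ̃(θ)/σ))·1{ν < z_{α/2}σ̃(θ)/√n} if θ < |ν − z_{α/2}σ̃(θ)/√n|; CR_a(θ, ν) = Φ(z_{α/2}σ̃(θ)/σ) − Φ(√n(ν − θ)/σ) if |ν − z_{α/2}σ̃(θ)/√n| ≤ θ ≤ ν + z_{α/2}σ̃(θ)/√n; and CR_a(θ, ν) = 1 − 2Φ(−z_{α/2}σ̃(θ)/σ) if θ > ν + z_{α/2}σ̃(θ)/√n. -/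

import Mathlib

/-!
The event is the window `(θ - r, θ + r)`, `r = z_{α/2} σ̃(θ)/√n`, cut by `{|x| > ν}`. Since
`θ ≥ 0` and `ν ≥ 0`, the position of `θ` relative to `ν - r`, `r - ν` and `ν + r` decides whether
this leaves nothing, one interval, or two disjoint intervals. Standardising by `x ↦ (x - θ)/s` with
`s = σ/√n` turns each interval probability into a difference of values of `Φ`, and the symmetry
`Φ(-x) = 1 - Φ(x)` brings the result into the stated form.
-/

open MeasureTheory ProbabilityTheory

/-- The standard normal cumulative distribution function. -/
noncomputable def Phi (x : ℝ) : ℝ := (gaussianReal 0 1 (Set.Iic x)).toReal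

/-- P_s(θ,ν) = Φ(√n(θ − ν)/σ) + Φ(√n(−θ − ν)/σ). -/
noncomputable def Ps (n : ℕ) (σ θ ν : ℝ) : ℝ :=
  Phi (Real.sqrt n * (θ - ν) / σ) + Phi (Real.sqrt n * (-θ - ν) / σ)

/-- σ̃(θ) = (1 + λ/θ²)⁻¹ σ for θ ≠ 0, with the convention σ̃(0) = 0. -/
noncomputable def sigTilde (lam σ θ : ℝ) : ℝ :=
  if θ = 0 then 0 else (1 + lam / θ ^ 2)⁻¹ * σ

open Classical in
/-- The piecewise function CR_a(θ,ν); here `za` denotes the quantile z_{α/2}. -/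
noncomputable def CRa (n : ℕ) (σ lam za θ ν : ℝ) : ℝ :=
  if θ < |ν - za * sigTilde lam σ θ / Real.sqrt n| then
    (Ps n σ θ ν - 2 * Phi (-(za * sigTilde lam σ θ / σ))) *
      (if ν < za * sigTilde lam σ θ / Real.sqrt n then 1 else 0)
  else if θ ≤ ν + za * sigTilde lam σ θ / Real.sqrt n then
    Phi (za * sigTilde lam σ θ / σ) - Phi (Real.sqrt n * (ν - θ) / σ)
  else 1 - 2 * Phi (-(za * sigTilde lam σ θ / σ))

open Classical in
/-- The piecewise function CR_b(θ,ν); here `za` denotes the quantile z_{α/2}. -/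
noncomputable def CRb (n : ℕ) (σ α za θ ν : ℝ) : ℝ :=
  if θ < |ν - za * σ / Real.sqrt n| then
    (Ps n σ θ ν - α) * (if ν < za * σ / Real.sqrt n then 1 else 0)
  else if θ ≤ ν + za * σ / Real.sqrt n then
    1 - α / 2 - Phi (Real.sqrt n * (ν - θ) / σ)
  else 1 - α

open Set

theorem Phi_monotone : Monotone Phi := fun _ _ h =>
  ENNReal.toReal_mono (measure_ne_top _ _) (measure_mono (Iic_subset_Iic.2 h))

theorem Phi_neg (x : ℝ) : Phi (-x) = 1 - Phi x := by
  have hsymm : (gaussianReal 0 1).real (Iic (-x)) = (gaussianReal 0 1).real (Ici x) := by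
    conv_lhs => rw [← neg_zero, ← gaussianReal_map_neg]
    rw [map_measureReal_apply (by fun_prop) measurableSet_Iic]
    congr 1
    ext y
    simp
  have hcompl : (gaussianReal 0 1).real (Ici x) = 1 - (gaussianReal 0 1).real (Iio x) := by
    rw [← compl_Iio, measureReal_compl measurableSet_Iio, probReal_univ]
  have := nullSingletonClass_gaussianReal (μ := 0) one_ne_zero
  rw [Phi, Phi, ← Measure.real_def, ← Measure.real_def, hsymm, hcompl,
    measureReal_congr Iio_ae_eq_Iic]

theorem Phi_zero : Phi 0 = 1 / 2 := by
  linarith [neg_zero (G := ℝ) ▸ Phi_neg 0]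

theorem gaussianReal_zero_one_map_mul_add {m s : ℝ} :
    (gaussianReal 0 1).map (fun x => s * x + m) = gaussianReal m (s ^ 2).toNNReal := by
  rw [show (fun x => s * x + m) = (· + m) ∘ (s * ·) from rfl,
    ← Measure.map_map (g := (· + m)) (f := (s * ·)) (by fun_prop) (by fun_prop),
    gaussianReal_map_const_mul, gaussianReal_map_add_const]
  congr 1
  · ring
  · ext; simp [Real.coe_toNNReal _ (sq_nonneg s)]

theorem gaussianReal_real_Iic {m s : ℝ} (hs : 0 < s) (x : ℝ) :
    (gaussianReal m (s ^ 2).toNNReal).real (Iic x) = Phi ((x - m) / s) := by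
  rw [← gaussianReal_zero_one_map_mul_add, map_measureReal_apply (by fun_prop) measurableSet_Iic,
    Phi, ← Measure.real_def]
  congr 1
  ext y
  simp [le_div_iff₀ hs, mul_comm, le_sub_iff_add_le]

theorem gaussianReal_real_Ioo {m s a b : ℝ} (hs : 0 < s) (hab : a ≤ b) :
    (gaussianReal m (s ^ 2).toNNReal).real (Ioo a b) = Phi ((b - m) / s) - Phi ((a - m) / s) := by
  have : NullSingletonClass (gaussianReal m (s ^ 2).toNNReal) :=
    nullSingletonClass_gaussianReal (by simp [hs.ne'])
  rw [measureReal_congr Ioo_ae_eq_Ioc, ← Iic_sdiff_Iic,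
    measureReal_sdiff (Iic_subset_Iic.2 hab) measurableSet_Iic,
    gaussianReal_real_Iic hs, gaussianReal_real_Iic hs]

section SetOfAbsSubLtAndLtAbs

variable {m r ν : ℝ}

theorem setOf_abs_sub_lt_and_lt_abs_eq_Ioo_union_Ioo (hm : 0 ≤ m) (hν : 0 ≤ ν) (h : m < r - ν) :
    {x : ℝ | |x - m| < r ∧ ν < |x|} = Ioo (m - r) (-ν) ∪ Ioo ν (m + r) := by
  ext x
  simp only [mem_ofPred_eq, abs_sub_lt_iff, lt_abs, mem_union, mem_Ioo]
  grind

theorem setOf_abs_sub_lt_and_lt_abs_eq_empty (hm : 0 ≤ m) (h : m < ν - r) :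
    {x : ℝ | |x - m| < r ∧ ν < |x|} = ∅ := by
  ext x
  simp only [mem_ofPred_eq, abs_sub_lt_iff, lt_abs, mem_empty_iff_false]
  grind

theorem setOf_abs_sub_lt_and_lt_abs_eq_Ioo (h₁ : |ν - r| ≤ m) (h₂ : m ≤ ν + r) :
    {x : ℝ | |x - m| < r ∧ ν < |x|} = Ioo ν (m + r) := by
  rw [abs_le] at h₁
  ext x
  simp only [mem_ofPred_eq, abs_sub_lt_iff, lt_abs, mem_Ioo]
  grind

theorem setOf_abs_sub_lt_and_lt_abs_eq_Ioo_sub_add (h : ν + r < m) :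
    {x : ℝ | |x - m| < r ∧ ν < |x|} = Ioo (m - r) (m + r) := by
  ext x
  simp only [mem_ofPred_eq, abs_sub_lt_iff, lt_abs, mem_Ioo]
  grind

end SetOfAbsSubLtAndLtAbs

open Classical in
theorem gaussianReal_real_setOf_abs_sub_lt_and_lt_abs {m s r ν : ℝ} (hm : 0 ≤ m) (hs : 0 < s)
    (hr : 0 ≤ r) (hν : 0 ≤ ν) :
    (gaussianReal m (s ^ 2).toNNReal).real {x | |x - m| < r ∧ ν < |x|} =
      if m < |ν - r| then
        (Phi ((m - ν) / s) + Phi ((-m - ν) / s) - 2 * Phi (-(r / s))) *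
          (if ν < r then 1 else 0)
      else if m ≤ ν + r then Phi (r / s) - Phi ((ν - m) / s)
      else 1 - 2 * Phi (-(r / s)) := by
  have hIoo {a b : ℝ} (hab : a ≤ b) := gaussianReal_real_Ioo (m := m) hs hab
  split_ifs with h₁ h₂ h₃
  · rw [abs_sub_comm, abs_of_pos (by linarith)] at h₁
    have hdisj : Disjoint (Ioo (m - r) (-ν)) (Ioo ν (m + r)) :=
      (Iic_disjoint_Ioi (neg_le_self hν)).mono (Ioo_subset_Iio_self.trans Iio_subset_Iic_self)
        Ioo_subset_Ioi_self
    rw [setOf_abs_sub_lt_and_lt_abs_eq_Ioo_union_Ioo hm hν h₁,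
      measureReal_union hdisj measurableSet_Ioo, hIoo (by linarith), hIoo (by linarith),
      add_sub_cancel_left, sub_sub_cancel_left, neg_div, ← neg_sub m ν, neg_div,
      show -ν - m = -m - ν by ring]
    linarith [Phi_neg (r / s), Phi_neg ((m - ν) / s)]
  · rw [abs_of_nonneg (by linarith)] at h₁
    rw [setOf_abs_sub_lt_and_lt_abs_eq_empty hm h₁, measureReal_empty, mul_zero]
  · rw [setOf_abs_sub_lt_and_lt_abs_eq_Ioo (not_lt.1 h₁) h₃,
      hIoo (by linarith [le_abs_self (ν - r)]), add_sub_cancel_left]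
  · rw [setOf_abs_sub_lt_and_lt_abs_eq_Ioo_sub_add (not_le.1 h₃), hIoo (by linarith),
      add_sub_cancel_left, sub_sub_cancel_left, neg_div]
    linarith [Phi_neg (r / s)]

theorem sigTilde_pos {lam σ θ : ℝ} (hlam : 0 ≤ lam) (hσ : 0 < σ) (hθ : θ ≠ 0) :
    0 < sigTilde lam σ θ := by
  rw [sigTilde, if_neg hθ]
  positivity

/-- piecewise formula for CR_a: the N(θ, σ²/n)-probability of the event
{|x − θ| < z_{α/2}σ̃(θ)/√n and |x| > ν} equals CR_a(θ, ν). -/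
theorem CRa_eq_prob (n : ℕ) (hn : 1 ≤ n) (σ lam α za θ ν : ℝ)
    (hσ : 0 < σ) (hlam : 0 < lam) (hα : α ∈ Set.Ioo (0:ℝ) 1)
    (hza : Phi (-za) = α / 2) (hθ : 0 < θ) (hν : 0 ≤ ν) :
    ((gaussianReal θ (Real.toNNReal (σ^2 / n)))
        {x : ℝ | |x - θ| < za * sigTilde lam σ θ / Real.sqrt n ∧ ν < |x|}).toReal
      = CRa n σ lam za θ ν := by
  have hsqrt : 0 < Real.sqrt n := Real.sqrt_pos.2 (by exact_mod_cast hn)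
  have hza_pos : 0 < za :=
    neg_lt_zero.1 <| Phi_monotone.reflect_lt <| by rw [hza, Phi_zero]; linarith [hα.2]
  have hr : 0 ≤ za * sigTilde lam σ θ / Real.sqrt n := by
    have := sigTilde_pos hlam.le hσ hθ.ne'
    positivity
  have hvar : σ ^ 2 / n = (σ / Real.sqrt n) ^ 2 := by
    rw [div_pow, Real.sq_sqrt n.cast_nonneg]
  have hstd (x : ℝ) : Real.sqrt n * x / σ = x / (σ / Real.sqrt n) := by
    rw [div_div_eq_mul_div, mul_comm]
  have hrs :
      za * sigTilde lam σ θ / σ = za * sigTilde lam σ θ / Real.sqrt n / (σ / Real.sqrt n) := by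
    rw [← hstd, mul_div_cancel₀ _ hsqrt.ne']
  rw [hvar, ← Measure.real_def,
    gaussianReal_real_setOf_abs_sub_lt_and_lt_abs hθ.le (by positivity) hr hν, CRa, Ps]
  simp only [hstd, hrs]
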